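/- arXiv:2102.05283 — 3 statements merged into one kernel-verified Lean document; each statement's English description precedes it below -/
import Mathlib

section
/- If t = (x,y,u,v) ∈ S^{2,2} with y = 0, then W(t) has fourth coordinate 0 and W²(t) ∈ F12 = {(x,y,b,0) : x+y = a, x,y ≥ 0}. -/
/-! On the face `y = 0` the fourth numerator `b y v` of `W` vanishes. On the face `v = 0`
the common factor `u` cancels and `W (x, y, u, 0) = (a x / (x + y), a y / (x + y), b, 0)`,
a point of `F12` as soon as `x, y ≥ 0`. So it suffices that `W t` keeps nonnegative
`x, y` with `x + y > 0` and has positive third coordinate. This holds because the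
numerators of `W₁ + W₂` and `W₃ + W₄` are `c u + d v` with `c, d > 0` positive
combinations of `x` and `y`. -/

noncomputable def W (a b s1 s2 : ℝ) (p : ℝ × ℝ × ℝ × ℝ) : ℝ × ℝ × ℝ × ℝ :=
  (a * p.1 * p.2.2.1 / ((p.1 + p.2.1) * (p.2.2.1 + p.2.2.2)),
   (s1 * p.1 * p.2.2.2 + a * p.2.1 * p.2.2.1 + a * p.2.1 * p.2.2.2) /
     ((p.1 + p.2.1) * (p.2.2.1 + p.2.2.2)),
   (s2 * p.1 * p.2.2.2 + b * p.1 * p.2.2.1 + b * p.2.1 * p.2.2.1) /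
     ((p.1 + p.2.1) * (p.2.2.1 + p.2.2.2)),
   b * p.2.1 * p.2.2.2 / ((p.1 + p.2.1) * (p.2.2.1 + p.2.2.2)))

def S22 : Set (ℝ × ℝ × ℝ × ℝ) :=
  {p | 0 ≤ p.1 ∧ 0 ≤ p.2.1 ∧ 0 ≤ p.2.2.1 ∧ 0 ≤ p.2.2.2 ∧
    p.1 + p.2.1 + p.2.2.1 + p.2.2.2 = 1 ∧
    (p.1, p.2.1) ≠ ((0 : ℝ), (0 : ℝ)) ∧ (p.2.2.1, p.2.2.2) ≠ ((0 : ℝ), (0 : ℝ))}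

def F12 (a b : ℝ) : Set (ℝ × ℝ × ℝ × ℝ) :=
  {p | p.1 + p.2.1 = a ∧ 0 ≤ p.1 ∧ 0 ≤ p.2.1 ∧ p.2.2.1 = b ∧ p.2.2.2 = 0}

lemma add_pos_of_nonneg_of_pair_ne_zero {x y : ℝ} (hx : 0 ≤ x) (hy : 0 ≤ y)
    (h : (x, y) ≠ (0, 0)) : 0 < x + y := by
  by_contra! hle
  exact h (by simp [show x = 0 by linarith, show y = 0 by linarith])

lemma mul_add_mul_pos {α β x y : ℝ} (hα : 0 < α) (hβ : 0 < β) (hx : 0 ≤ x) (hy : 0 ≤ y)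
    (hxy : 0 < x + y) : 0 < α * x + β * y := by
  rcases hx.lt_or_eq with hx | rfl
  · positivity
  · simp only [zero_add] at hxy
    positivity

section W

variable {a b s1 s2 x y u v : ℝ}

lemma W_fourth_eq_zero_of_snd_eq_zero {p : ℝ × ℝ × ℝ × ℝ} (hp : p.2.1 = 0) :
    (W a b s1 s2 p).2.2.2 = 0 := by
  simp [W, hp]

lemma W_fst_nonneg (ha : 0 ≤ a) (hx : 0 ≤ x) (hy : 0 ≤ y) (hu : 0 ≤ u) (hv : 0 ≤ v) :
    0 ≤ (W a b s1 s2 (x, y, u, v)).1 := by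
  simp only [W]
  positivity

lemma W_snd_nonneg (ha : 0 ≤ a) (hs1 : 0 ≤ s1) (hx : 0 ≤ x) (hy : 0 ≤ y) (hu : 0 ≤ u)
    (hv : 0 ≤ v) : 0 ≤ (W a b s1 s2 (x, y, u, v)).2.1 := by
  simp only [W]
  positivity

lemma W_fst_add_snd_pos (ha : 0 < a) (hs1 : 0 < s1) (hx : 0 ≤ x) (hy : 0 ≤ y) (hu : 0 ≤ u)
    (hv : 0 ≤ v) (hxy : 0 < x + y) (huv : 0 < u + v) :
    0 < (W a b s1 s2 (x, y, u, v)).1 + (W a b s1 s2 (x, y, u, v)).2.1 := by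
  simp only [W]
  rw [← add_div]
  have hnum : a * x * u + (s1 * x * v + a * y * u + a * y * v)
      = (a * x + a * y) * u + (s1 * x + a * y) * v := by ring
  rw [hnum]
  exact div_pos (mul_add_mul_pos (mul_add_mul_pos ha ha hx hy hxy)
    (mul_add_mul_pos hs1 ha hx hy hxy) hu hv (by linarith)) (by positivity)

lemma W_third_add_fourth_pos (hb : 0 < b) (hs2 : 0 < s2) (hx : 0 ≤ x) (hy : 0 ≤ y)
    (hu : 0 ≤ u) (hv : 0 ≤ v) (hxy : 0 < x + y) (huv : 0 < u + v) :
    0 < (W a b s1 s2 (x, y, u, v)).2.2.1 + (W a b s1 s2 (x, y, u, v)).2.2.2 := by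
  simp only [W]
  rw [← add_div]
  have hnum : s2 * x * v + b * x * u + b * y * u + b * y * v
      = (b * x + b * y) * u + (s2 * x + b * y) * v := by ring
  rw [hnum]
  exact div_pos (mul_add_mul_pos (mul_add_mul_pos hb hb hx hy hxy)
    (mul_add_mul_pos hs2 hb hx hy hxy) hu hv (by linarith)) (by positivity)

lemma W_of_fourth_eq_zero (hxy : x + y ≠ 0) (hu : u ≠ 0) :
    W a b s1 s2 (x, y, u, 0) = (a * x / (x + y), a * y / (x + y), b, 0) := by
  simp only [W, add_zero, mul_zero, zero_div, Prod.mk.injEq, and_true]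
  refine ⟨?_, ?_, ?_⟩ <;> field_simp <;> ring

lemma W_mem_F12 (ha : 0 ≤ a) {p : ℝ × ℝ × ℝ × ℝ} (h1 : 0 ≤ p.1) (h2 : 0 ≤ p.2.1)
    (h12 : 0 < p.1 + p.2.1) (h3 : p.2.2.1 ≠ 0) (h4 : p.2.2.2 = 0) :
    W a b s1 s2 p ∈ F12 a b := by
  obtain ⟨x, y, u, v⟩ := p
  dsimp only at h1 h2 h12 h3 h4
  subst h4
  rw [W_of_fourth_eq_zero h12.ne' h3]
  refine ⟨?_, by positivity, by positivity, rfl, rfl⟩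
  rw [← add_div, ← mul_add, mul_div_assoc, div_self h12.ne', mul_one]

end W

theorem stmt5_general (a b s1 s2 : ℝ) (ha : 0 < a) (hb : 0 < b) (hs1 : 0 < s1) (hs2 : 0 < s2)
    (t : ℝ × ℝ × ℝ × ℝ) (ht : t ∈ S22) (hy : t.2.1 = 0) :
    (W a b s1 s2 t).2.2.2 = 0 ∧
    (W a b s1 s2 (W a b s1 s2 t)).2.2.1 = b ∧
    (W a b s1 s2 (W a b s1 s2 t)).2.2.2 = 0 ∧
    (W a b s1 s2 (W a b s1 s2 t)).1 + (W a b s1 s2 (W a b s1 s2 t)).2.1 = a ∧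
    0 ≤ (W a b s1 s2 (W a b s1 s2 t)).1 ∧ 0 ≤ (W a b s1 s2 (W a b s1 s2 t)).2.1 := by
  obtain ⟨x, y, u, v⟩ := t
  obtain ⟨hx, hy0, hu, hv, -, hxy_ne, huv_ne⟩ := ht
  have hxy := add_pos_of_nonneg_of_pair_ne_zero hx hy0 hxy_ne
  have huv := add_pos_of_nonneg_of_pair_ne_zero hu hv huv_ne
  have h4 : (W a b s1 s2 (x, y, u, v)).2.2.2 = 0 := W_fourth_eq_zero_of_snd_eq_zero hy
  have h3 := W_third_add_fourth_pos (a := a) (s1 := s1) hb hs2 hx hy0 hu hv hxy huv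
  rw [h4, add_zero] at h3
  obtain ⟨hsum, hfst, hsnd, hthird, hfourth⟩ := W_mem_F12 (b := b) (s1 := s1) (s2 := s2) ha.le
    (W_fst_nonneg ha.le hx hy0 hu hv) (W_snd_nonneg ha.le hs1.le hx hy0 hu hv)
    (W_fst_add_snd_pos ha hs1 hx hy0 hu hv hxy huv) h3.ne' h4
  exact ⟨h4, hthird, hfourth, hsum, hfst, hsnd⟩

theorem stmt5 (a b s1 s2 : ℝ) (ha : 0 < a) (hb : 0 < b) (hs1 : 0 < s1) (hs2 : 0 < s2)
    (hab : a + b = 1) (hs : s1 + s2 = 1)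
    (t : ℝ × ℝ × ℝ × ℝ) (ht : t ∈ S22) (hy : t.2.1 = 0) :
    (W a b s1 s2 t).2.2.2 = 0 ∧
    (W a b s1 s2 (W a b s1 s2 t)).2.2.1 = b ∧
    (W a b s1 s2 (W a b s1 s2 t)).2.2.2 = 0 ∧
    (W a b s1 s2 (W a b s1 s2 t)).1 + (W a b s1 s2 (W a b s1 s2 t)).2.1 = a ∧
    0 ≤ (W a b s1 s2 (W a b s1 s2 t)).1 ∧ 0 ≤ (W a b s1 s2 (W a b s1 s2 t)).2.1 :=
  stmt5_general a b s1 s2 ha hb hs1 hs2 t ht hy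
end

section
/- If p1 > 1 > p2 > 0, then the set M1 = {(α,β) ∈ [0,1]² : β ≥ α} is invariant under the map V(α,β) = (α(1-β)/(1+(p1-1)αβ), β(1-α)/(1+(p2-1)αβ)); i.e., if β ≥ α then β(1-α)/(1+(p2-1)αβ) ≥ α(1-β)/(1+(p1-1)αβ). -/
noncomputable def V (p1 p2 : ℝ) (q : ℝ × ℝ) : ℝ × ℝ :=
  (q.1 * (1 - q.2) / (1 + (p1 - 1) * q.1 * q.2),
   q.2 * (1 - q.1) / (1 + (p2 - 1) * q.1 * q.2))

/-! Clearing the (positive) denominators, the claim becomes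
`α(1-β)(1+(p2-1)αβ) ≤ β(1-α)(1+(p1-1)αβ)`, and the difference of the two sides is
`(β-α)(1+(p1-1)αβ) + (p1-p2)α²β(1-β)`, a sum of nonnegative terms when `α ≤ β` and `p2 ≤ p1`. -/

open Set

lemma one_add_sub_one_mul_mul_pos {p a b : ℝ} (hp : 0 < p) (ha : a ∈ Icc (0 : ℝ) 1)
    (hb : b ∈ Icc (0 : ℝ) 1) : 0 < 1 + (p - 1) * a * b := by
  obtain ⟨ha0, ha1⟩ := ha
  obtain ⟨hb0, hb1⟩ := hb
  have hab0 : 0 ≤ a * b := mul_nonneg ha0 hb0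
  have hab1 : a * b ≤ 1 := mul_le_one₀ ha1 hb0 hb1
  rw [mul_assoc]
  nlinarith [mul_nonneg hp.le (sub_nonneg.2 hab1), mul_nonneg hp.le hab0]

theorem V_fst_le_V_snd {p1 p2 α β : ℝ} (hp1 : 0 < p1) (hp2 : 0 < p2) (hp : p2 ≤ p1)
    (hα : α ∈ Icc (0 : ℝ) 1) (hβ : β ∈ Icc (0 : ℝ) 1) (hle : α ≤ β) :
    (V p1 p2 (α, β)).1 ≤ (V p1 p2 (α, β)).2 := by
  have hD1 := one_add_sub_one_mul_mul_pos hp1 hα hβ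
  have hD2 := one_add_sub_one_mul_mul_pos hp2 hα hβ
  simp only [V]
  rw [div_le_div_iff₀ hD1 hD2, ← sub_nonneg]
  have key : β * (1 - α) * (1 + (p1 - 1) * α * β) - α * (1 - β) * (1 + (p2 - 1) * α * β)
      = (β - α) * (1 + (p1 - 1) * α * β) + (p1 - p2) * (α ^ 2 * β * (1 - β)) := by ring
  rw [key]
  have hcorr : 0 ≤ α ^ 2 * β * (1 - β) :=
    mul_nonneg (mul_nonneg (sq_nonneg α) hβ.1) (sub_nonneg.2 hβ.2)
  exact add_nonneg (mul_nonneg (sub_nonneg.2 hle) hD1.le) (mul_nonneg (sub_nonneg.2 hp) hcorr)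

theorem stmt18 (p1 p2 : ℝ) (h1 : 1 < p1) (h2 : p2 < 1) (h2' : 0 < p2)
    (α β : ℝ) (h : (α, β) ∈ Set.Icc (0 : ℝ) 1 ×ˢ Set.Icc (0 : ℝ) 1)
    (hle : α ≤ β) :
    α * (1 - β) / (1 + (p1 - 1) * α * β) ≤ β * (1 - α) / (1 + (p2 - 1) * α * β) :=
  V_fst_le_V_snd (by linarith) h2' (by linarith) h.1 h.2 hle
end

section
/- Suppose σ1 = a and σ2 = b. Then for each θ ∈ ℝ the surface Ω_θ = {(x,y,u,v) ∈ S^{2,2} : v/(u+v) = x/(x+y) + 1 - θ} is invariant under W, and Ω_1 = {(x,y,u,v) ∈ S^{2,2} : yv = xu}. -/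
/-! The image of `W` lies on the slice `x + y = a`, `u + v = b`. Hence, with
`D = (x + y)(u + v)`, the quantity `v/(u+v) - x/(x+y) = 1 - θ` at `W p` is
`(b·yv)/(bD) - (a·xu)/(aD) = (yv - xu)/D`, which is the same quantity at `p`. -/

lemma add_pos_of_ne_zero_pair {x y : ℝ} (hx : 0 ≤ x) (hy : 0 ≤ y)
    (h : (x, y) ≠ ((0 : ℝ), (0 : ℝ))) : 0 < x + y := by
  by_contra! hle
  exact h (by rw [show x = 0 by linarith, show y = 0 by linarith])

lemma add_pos_of_mem_S22 {p : ℝ × ℝ × ℝ × ℝ} (hp : p ∈ S22) :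
    0 < p.1 + p.2.1 ∧ 0 < p.2.2.1 + p.2.2.2 :=
  ⟨add_pos_of_ne_zero_pair hp.1 hp.2.1 hp.2.2.2.2.2.1,
    add_pos_of_ne_zero_pair hp.2.2.1 hp.2.2.2.1 hp.2.2.2.2.2.2⟩

/-- The `θ` for which `p` lies on `Ω_θ`. -/
noncomputable def thetaOf (p : ℝ × ℝ × ℝ × ℝ) : ℝ :=
  p.1 / (p.1 + p.2.1) + 1 - p.2.2.2 / (p.2.2.1 + p.2.2.2)

section
variable {a b x y u v : ℝ}

lemma W_xy_sum_eq (hxy : x + y ≠ 0) (huv : u + v ≠ 0) :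
    (W a b a b (x, y, u, v)).1 + (W a b a b (x, y, u, v)).2.1 = a := by
  simp only [W]
  field_simp
  ring

lemma W_uv_sum_eq (hxy : x + y ≠ 0) (huv : u + v ≠ 0) :
    (W a b a b (x, y, u, v)).2.2.1 + (W a b a b (x, y, u, v)).2.2.2 = b := by
  simp only [W]
  field_simp
  ring

lemma thetaOf_W (ha : a ≠ 0) (hb : b ≠ 0) (hxy : x + y ≠ 0) (huv : u + v ≠ 0) :
    thetaOf (W a b a b (x, y, u, v)) = thetaOf (x, y, u, v) := by
  rw [thetaOf, W_xy_sum_eq hxy huv, W_uv_sum_eq hxy huv, thetaOf]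
  simp only [W]
  field_simp
  ring

lemma div_add_eq_div_add_iff (hxy : x + y ≠ 0) (huv : u + v ≠ 0) :
    v / (u + v) = x / (x + y) ↔ y * v = x * u := by
  rw [div_eq_div_iff huv hxy]
  constructor <;> intro h <;> linarith

end

lemma W_mapsTo_S22 {a b : ℝ} (ha : 0 < a) (hb : 0 < b) (hab : a + b = 1) :
    Set.MapsTo (W a b a b) S22 S22 := by
  rintro ⟨x, y, u, v⟩ hp
  obtain ⟨hxy, huv⟩ := add_pos_of_mem_S22 hp
  obtain ⟨hx, hy, hu, hv, -⟩ := hp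
  have hXY := W_xy_sum_eq (a := a) (b := b) hxy.ne' huv.ne'
  have hUV := W_uv_sum_eq (a := a) (b := b) hxy.ne' huv.ne'
  refine ⟨?_, ?_, ?_, ?_, by linarith, fun h ↦ ?_, fun h ↦ ?_⟩
  iterate 4 simp only [W]; positivity
  all_goals
    simp only [Prod.mk.injEq] at h
    linarith

theorem stmt19 (a b : ℝ) (ha : 0 < a) (hb : 0 < b) (hab : a + b = 1) :
    (∀ θ : ℝ, Set.MapsTo (W a b a b)
      {p : ℝ × ℝ × ℝ × ℝ | p ∈ S22 ∧
        p.2.2.2 / (p.2.2.1 + p.2.2.2) = p.1 / (p.1 + p.2.1) + 1 - θ}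
      {p : ℝ × ℝ × ℝ × ℝ | p ∈ S22 ∧
        p.2.2.2 / (p.2.2.1 + p.2.2.2) = p.1 / (p.1 + p.2.1) + 1 - θ}) ∧
    {p : ℝ × ℝ × ℝ × ℝ | p ∈ S22 ∧
        p.2.2.2 / (p.2.2.1 + p.2.2.2) = p.1 / (p.1 + p.2.1) + 1 - 1} =
    {p : ℝ × ℝ × ℝ × ℝ | p ∈ S22 ∧ p.2.1 * p.2.2.2 = p.1 * p.2.2.1} := by
  refine ⟨fun θ ↦ ?_, ?_⟩
  · rintro ⟨x, y, u, v⟩ ⟨hp, hθ⟩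
    obtain ⟨hxy, huv⟩ := add_pos_of_mem_S22 hp
    have hinv := thetaOf_W ha.ne' hb.ne' hxy.ne' huv.ne'
    refine ⟨W_mapsTo_S22 ha hb hab hp, ?_⟩
    simp only [thetaOf] at hinv hθ ⊢
    linarith
  · ext ⟨x, y, u, v⟩
    refine and_congr_right fun hp ↦ ?_
    obtain ⟨hxy, huv⟩ := add_pos_of_mem_S22 hp
    simpa only [add_sub_cancel_right] using div_add_eq_div_add_iff hxy.ne' huv.ne'
end
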